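/- Let p be a prime, let b ≥ 1 and c ≥ 2 be integers, and let α, β be integers with gcd(αβ, p) = 1. Then the classical Kloosterman sum S(α, β p^b; p^c) = 0. -/

import Mathlib

open scoped BigOperators

/-- `e(x) = exp(2 π i x)`. -/
noncomputable def eC (x : ℝ) : ℂ := Complex.exp (2 * Real.pi * Complex.I * x)

/-- The GL(3) long-element Kloosterman sum `S(m₁,m₂,n₁,n₂;D₁,D₂)`.
Since the summand is independent of the admissible choices of `Y₁,Z₁,Y₂,Z₂`
(and each admissible `(B₁,C₁)` has exactly `D₁` admissible pairs `(Y₁,Z₁)` modulo `D₁`,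
similarly for `(Y₂,Z₂)`), we define the sum by averaging over all admissible choices. -/
noncomputable def SGL3 (m1 m2 n1 n2 : ℤ) (D1 D2 : ℕ) : ℂ :=
  ((D1 : ℂ) * (D2 : ℂ))⁻¹ *
    ∑ B1 ∈ Finset.range D1, ∑ C1 ∈ Finset.range D1,
      ∑ B2 ∈ Finset.range D2, ∑ C2 ∈ Finset.range D2,
        ∑ Y1 ∈ Finset.range D1, ∑ Z1 ∈ Finset.range D1,
          ∑ Y2 ∈ Finset.range D2, ∑ Z2 ∈ Finset.range D2,
            if Nat.gcd B1 (Nat.gcd C1 D1) = 1 ∧ Nat.gcd B2 (Nat.gcd C2 D2) = 1 ∧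
                ((D1 : ℤ) * (D2 : ℤ)) ∣ ((D1 : ℤ) * (C2 : ℤ) + (B1 : ℤ) * (B2 : ℤ) + (C1 : ℤ) * (D2 : ℤ)) ∧
                (D1 : ℤ) ∣ ((Y1 : ℤ) * (B1 : ℤ) + (Z1 : ℤ) * (C1 : ℤ) - 1) ∧
                (D2 : ℤ) ∣ ((Y2 : ℤ) * (B2 : ℤ) + (Z2 : ℤ) * (C2 : ℤ) - 1) then
              eC (((m1 * (B1 : ℤ) + n1 * ((Y1 : ℤ) * (D2 : ℤ) - (Z1 : ℤ) * (B2 : ℤ)) : ℤ) : ℝ) / (D1 : ℝ)) *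
                eC (((m2 * (B2 : ℤ) + n2 * ((Y2 : ℤ) * (D1 : ℤ) - (Z2 : ℤ) * (B1 : ℤ)) : ℤ) : ℝ) / (D2 : ℝ))
            else 0

/-- The classical Kloosterman sum `S(m,n;c) = ∑_{x (c), (x,c)=1} e((m x + n x̄)/c)`. -/
noncomputable def Kl (m n : ℤ) (c : ℕ) : ℂ :=
  ∑ x ∈ Finset.range c,
    if Nat.gcd x c = 1 then
      eC (((m * (x : ℤ) + n * ((((x : ZMod c)⁻¹).val : ℕ) : ℤ) : ℤ) : ℝ) / (c : ℝ))
    else 0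

/-- The partial (middle two-variable) Fourier transform of the GL(3) Kloosterman sum. -/
noncomputable def Shat (a u t b : ℤ) (D1 D2 : ℕ) : ℂ :=
  ((D1 : ℂ) * (D2 : ℂ))⁻¹ *
    ∑ x ∈ Finset.range D1, ∑ y ∈ Finset.range D2,
      SGL3 a (y : ℤ) (x : ℤ) b D1 D2 * eC (((-((x : ℤ) * t) : ℤ) : ℝ) / (D1 : ℝ)) *
        eC (((-((y : ℤ) * u) : ℤ) : ℝ) / (D2 : ℝ))

/-- `R(t,D₁,D₂) = max_{(ab,D₁)=1} ∑_{u (D₂)} |Ŝ(a,u,bt,1,D₁,D₂)|`, realized as a supremum. -/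
noncomputable def Rfun (t : ℤ) (D1 D2 : ℕ) : ℝ :=
  sSup {r : ℝ | ∃ a b : ℤ, Int.gcd (a * b) D1 = 1 ∧
    r = ∑ u ∈ Finset.range D2, Norm.norm (Shat a (u : ℤ) (b * t) 1 D1 D2)}

/-- The quantity `M(β)` with outer sum over `q ≤ Q` and moduli `c ≤ X/q`. -/
noncomputable def Mgen (Q X : ℝ) (β : ℕ → ℂ) : ℝ :=
  ∑ q ∈ Finset.Icc 1 ⌊Q⌋₊, ∑ d1 ∈ q.divisors,
    ((d1 : ℝ) / (q : ℝ)) *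
      ∑ c ∈ Finset.Icc 1 ⌊X / (q : ℝ)⌋₊,
        if Nat.gcd c q = 1 then
          ∑ tt ∈ Finset.range c,
            if Nat.gcd tt c = 1 then
              (Norm.norm (∑ᶠ (n : ℕ) (_ : Nat.gcd n q = d1),
                β n * eC (((tt * n : ℕ) : ℝ) / (c : ℝ)))) ^ 2
            else 0
        else 0

/-- The bilinear form `𝒮 = ∑_{D₁,D₂,m,n} γ_{D₁,D₂} α_m β_n S(1,m,n,1;D₁,D₂)`. -/
noncomputable def Sbil (γ : ℕ → ℕ → ℂ) (α β : ℕ → ℂ) : ℂ :=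
  ∑ᶠ (D1 : ℕ) (D2 : ℕ) (m : ℕ) (n : ℕ),
    γ D1 D2 * α m * β n * SGL3 1 (m : ℤ) (n : ℤ) 1 D1 D2

/-- `‖β‖ = (∑_n |β_n|²)^{1/2}`. -/
noncomputable def seqNorm (β : ℕ → ℂ) : ℝ := Real.sqrt (∑ᶠ n : ℕ, Norm.norm (β n) ^ 2)

/-! Write a residue modulo `a * q`, where `q ∣ a`, as `x + a * y` with `x < a` and `y < q`. Since
`a * q ∣ a ^ 2`, the number `x + a * y` is invertible modulo `a * q` exactly when `x` is, and then
`(x + a * y)⁻¹ ≡ x⁻¹ (mod a)`; so for `q ∣ n` the term `n * (x + a * y)⁻¹` does not depend on `y`, and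
the sum over `y` splits off as the complete character sum `∑_{y mod q} e(m y / q)`, which vanishes
when `q ∤ m`. The theorem is the case `a = p ^ (c - 1)`, `q = p`, `m = α`, `n = β p ^ b`. -/

theorem Finset.sum_range_mul_eq_sum_sum {M : Type*} [AddCommMonoid M] (a q : ℕ) (f : ℕ → M) :
    ∑ z ∈ Finset.range (a * q), f z = ∑ x ∈ Finset.range a, ∑ y ∈ Finset.range q, f (x + a * y) := by
  rw [Finset.sum_range, ← (finProdFinEquiv.trans (finCongr (mul_comm q a))).sum_comp,
    Fintype.sum_prod_type, Finset.sum_comm]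
  simp [Finset.sum_range]

theorem Nat.coprime_add_mul_iff_of_dvd {a q : ℕ} (hqa : q ∣ a) (x y : ℕ) :
    (x + a * y).Coprime (a * q) ↔ x.Coprime (a * q) := by
  have key : ∀ z : ℕ, z.Coprime (a * q) ↔ z.Coprime a := fun z => by
    rw [Nat.coprime_mul_iff_right]
    exact ⟨And.left, fun h => ⟨h, h.coprime_dvd_right hqa⟩⟩
  rw [key, key, Nat.coprime_add_mul_left_left]

theorem eC_intCast_div (N : ℕ) [NeZero N] (j : ℤ) :
    eC ((j : ℝ) / N) = ZMod.stdAddChar (j : ZMod N) := by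
  rw [eC, ZMod.stdAddChar_coe]
  push_cast
  ring_nf

theorem ZMod.stdAddChar_natCast_mul (a q : ℕ) [NeZero a] [NeZero q] (j : ℤ) :
    ZMod.stdAddChar ((a : ZMod (a * q)) * (j : ZMod (a * q))) = ZMod.stdAddChar (j : ZMod q) := by
  have h := ZMod.stdAddChar_coe (N := a * q) (a * j)
  push_cast at h
  rw [h, ZMod.stdAddChar_coe]
  congr 1
  field_simp [NeZero.ne a]

theorem ZMod.sum_range_stdAddChar_mul_eq_zero (q : ℕ) [NeZero q] {m : ZMod q} (hm : m ≠ 0) :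
    ∑ y ∈ Finset.range q, ZMod.stdAddChar ((y : ZMod q) * m) = 0 := by
  set ψ : AddChar (ZMod q) ℂ := ZMod.stdAddChar
  have hψ : ψ m ≠ 1 := by
    rwa [← AddChar.map_zero_eq_one ψ, ZMod.injective_stdAddChar.ne_iff]
  have hψq : ψ m ^ q = 1 := by
    rw [← AddChar.map_nsmul_eq_pow, nsmul_eq_mul, ZMod.natCast_self, zero_mul,
      AddChar.map_zero_eq_one]
  calc ∑ y ∈ Finset.range q, ψ ((y : ZMod q) * m)
      = ∑ y ∈ Finset.range q, ψ m ^ y := by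
        simp only [← AddChar.map_nsmul_eq_pow, nsmul_eq_mul]
    _ = 0 := by rw [geom_sum_eq hψ, hψq, sub_self, zero_div]

theorem ZMod.mul_inv_add_mul_eq {a q : ℕ} {n : ℤ} (hqn : (q : ℤ) ∣ n) {u v : ZMod (a * q)}
    (hu : IsUnit u) (hw : IsUnit (u + a * v)) :
    (n : ZMod (a * q)) * (u + a * v)⁻¹ = n * u⁻¹ := by
  -- `(u + a v)⁻¹ - u⁻¹ = -a v u⁻¹ (u + a v)⁻¹`, and `n a = k (a q) = 0`.
  obtain ⟨k, rfl⟩ := hqn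
  have hN : ((a * q : ℕ) : ZMod (a * q)) = 0 := ZMod.natCast_self _
  have hu1 := ZMod.mul_inv_of_unit u hu
  have hw1 := ZMod.mul_inv_of_unit _ hw
  push_cast at hN ⊢
  linear_combination (-(q * k) * (u + a * v)⁻¹) * hu1 + (q * k * u⁻¹) * hw1
    - (k * v * u⁻¹ * (u + a * v)⁻¹) * hN

noncomputable def kloostermanTerm (m n : ℤ) (N : ℕ) [NeZero N] (x : ℕ) : ℂ :=
  if x.Coprime N then
    ZMod.stdAddChar ((m : ZMod N) * (x : ZMod N) + (n : ZMod N) * (x : ZMod N)⁻¹)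
  else 0

theorem Kl_eq_sum_kloostermanTerm (m n : ℤ) (N : ℕ) [NeZero N] :
    Kl m n N = ∑ x ∈ Finset.range N, kloostermanTerm m n N x := by
  refine Finset.sum_congr rfl fun x _ => if_congr Iff.rfl ?_ rfl
  rw [eC_intCast_div]
  push_cast
  rw [ZMod.natCast_val, ZMod.cast_id]

theorem kloostermanTerm_add_mul {m n : ℤ} {a q : ℕ} [NeZero a] [NeZero q] (hqa : q ∣ a)
    (hqn : (q : ℤ) ∣ n) (x y : ℕ) :
    kloostermanTerm m n (a * q) (x + a * y) =
      kloostermanTerm m n (a * q) x * ZMod.stdAddChar ((y : ZMod q) * (m : ZMod q)) := by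
  have hxy := Nat.coprime_add_mul_iff_of_dvd hqa x y
  by_cases hx : x.Coprime (a * q)
  · rw [kloostermanTerm, kloostermanTerm, if_pos (hxy.mpr hx), if_pos hx]
    have hu : IsUnit (x : ZMod (a * q)) := (ZMod.isUnit_iff_coprime x _).mpr hx
    have hw : IsUnit ((x + a * y : ℕ) : ZMod (a * q)) :=
      (ZMod.isUnit_iff_coprime _ _).mpr (hxy.mpr hx)
    push_cast at hw ⊢
    rw [ZMod.mul_inv_add_mul_eq hqn hu hw,
      show (m : ZMod (a * q)) * (x + a * y) + n * (x : ZMod (a * q))⁻¹ =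
        (m * x + n * (x : ZMod (a * q))⁻¹) + a * ((y * m : ℤ) : ZMod (a * q)) by push_cast; ring,
      AddChar.map_add_eq_mul, ZMod.stdAddChar_natCast_mul]
    push_cast
    rfl
  · rw [kloostermanTerm, kloostermanTerm, if_neg (mt hxy.mp hx), if_neg hx, zero_mul]

theorem Kl_eq_zero_of_dvd {m n : ℤ} {a q : ℕ} (hqa : q ∣ a) (hqn : (q : ℤ) ∣ n)
    (hqm : ¬ (q : ℤ) ∣ m) : Kl m n (a * q) = 0 := by
  rcases eq_or_ne a 0 with rfl | ha
  · simp [Kl]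
  have : NeZero a := ⟨ha⟩
  have : NeZero q := ⟨by rintro rfl; exact ha (zero_dvd_iff.mp hqa)⟩
  have hm : (m : ZMod q) ≠ 0 := by rwa [ne_eq, ZMod.intCast_zmod_eq_zero_iff_dvd]
  rw [Kl_eq_sum_kloostermanTerm, Finset.sum_range_mul_eq_sum_sum]
  simp_rw [kloostermanTerm_add_mul hqa hqn, ← Finset.mul_sum,
    ZMod.sum_range_stdAddChar_mul_eq_zero q hm, mul_zero, Finset.sum_const_zero]

/-- Vanishing of classical Kloosterman sums: `S(α, β p^b; p^c) = 0` for `b ≥ 1`, `c ≥ 2`. -/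
theorem kloosterman_vanishes (p : ℕ) (hp : p.Prime) (b c : ℕ) (hb : 1 ≤ b) (hc : 2 ≤ c)
    (α β : ℤ) (h : Int.gcd (α * β) p = 1) :
    Kl α (β * (p : ℤ) ^ b) (p ^ c) = 0 := by
  have hpα : ¬ (p : ℤ) ∣ α := fun hpα => by
    have hp1 := Int.dvd_gcd (dvd_mul_of_dvd_left hpα β) (dvd_refl (p : ℤ))
    rw [h] at hp1
    exact hp.ne_one (Nat.dvd_one.mp hp1)
  rw [← pow_sub_one_mul (by omega : c ≠ 0)]
  exact Kl_eq_zero_of_dvd (dvd_pow_self p (by omega))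
    (dvd_mul_of_dvd_right (dvd_pow_self _ (by omega)) β) hpα
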